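/- Let (U1^n, V1^n) consist of n i.i.d. copies of a pair (U1, V1) of finitely-valued random variables, let X1^n be any finitely-valued random sequence and Y1^n any finitely-valued random sequence such that the Markov chains U1^n -> X1^n -> Y1^n and V1^n -> U1^n -> Y1^n hold, and let Uhat1^n = g(Y1^n, V1^n) for an arbitrary function g. Then (1/n) I(X1^n; Y1^n) >= H(U1|V1) - (1/n) H(U1^n | Uhat1^n). -/

import Mathlib

open Finset Real Filter
open scoped Classical

namespace Paper

/-- `p` is a probability mass function on the finite type `α`. -/
def IsPMF {α : Type*} [Fintype α] (p : α → ℝ) : Prop :=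
  (∀ a, 0 ≤ p a) ∧ ∑ a, p a = 1

/-- `k` is a transition probability (channel) from `α` to the finite type `β`. -/
def IsKernel {α β : Type*} [Fintype β] (k : α → β → ℝ) : Prop :=
  ∀ a, IsPMF (k a)

variable {Ω : Type*} [Fintype Ω]

/-- Probability that the random variable `X` takes the value `x`, under the weight `p`. -/
noncomputable def pr {α : Type*} (p : Ω → ℝ) (X : Ω → α) (x : α) : ℝ :=
  ∑ ω, if X ω = x then p ω else 0

/-- Shannon entropy (base 2) of the random variable `X` under `p`. -/
noncomputable def ent {α : Type*} [Fintype α] (p : Ω → ℝ) (X : Ω → α) : ℝ :=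
  ∑ x, -(pr p X x * Real.logb 2 (pr p X x))

/-- Conditional entropy `H(X|Y) = H(X,Y) - H(Y)`. -/
noncomputable def condEnt {α β : Type*} [Fintype α] [Fintype β]
    (p : Ω → ℝ) (X : Ω → α) (Y : Ω → β) : ℝ :=
  ent p (fun ω => (X ω, Y ω)) - ent p Y

/-- Mutual information `I(X;Y) = H(X) + H(Y) - H(X,Y)`. -/
noncomputable def mi {α β : Type*} [Fintype α] [Fintype β]
    (p : Ω → ℝ) (X : Ω → α) (Y : Ω → β) : ℝ :=
  ent p X + ent p Y - ent p (fun ω => (X ω, Y ω))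

/-- Conditional mutual information `I(X;Y|Z) = H(X,Z) + H(Y,Z) - H(X,Y,Z) - H(Z)`. -/
noncomputable def cmi {α β γ : Type*} [Fintype α] [Fintype β] [Fintype γ]
    (p : Ω → ℝ) (X : Ω → α) (Y : Ω → β) (Z : Ω → γ) : ℝ :=
  ent p (fun ω => (X ω, Z ω)) + ent p (fun ω => (Y ω, Z ω))
    - ent p (fun ω => (X ω, Y ω, Z ω)) - ent p Z

/-- The Markov chain `A → B → C`: `A` and `C` are conditionally independent given `B`. -/
def MarkovChain {α β γ : Type*} (p : Ω → ℝ) (A : Ω → α) (B : Ω → β) (C : Ω → γ) : Prop :=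
  ∀ a b c, pr p (fun ω => (A ω, B ω, C ω)) (a, b, c) * pr p B b =
    pr p (fun ω => (A ω, B ω)) (a, b) * pr p (fun ω => (B ω, C ω)) (b, c)

/-! Data processing along `U → X → Y` gives `I(X;Y) ≥ I(U;Y)`, and the Markov chain
`V → U → Y` gives `I(U;Y) ≥ I(U;Y|V) = H(U|V) - H(U|Y,V)`. Since `Û` is a function of
`(Y, V)`, `H(U|Y,V) ≤ H(U|Û)`, while `H(Uⁿ|Vⁿ) = n H(U₁|V₁)` because the pairs are i.i.d.

Nonnegativity of conditional mutual information, and its vanishing along a Markov chain, are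
both read off from `I(X;Y|Z) = E[log p(x,y,z) p(z) / (p(x,z) p(y,z))]`: the first is Gibbs'
inequality, the second says the argument of the logarithm is `1`. -/

theorem sum_mul_logb_div_nonneg {ι : Type*} [Fintype ι] {b : ℝ} (hb : 1 < b) {P Q : ι → ℝ}
    (hP : ∀ i, 0 ≤ P i) (hQ : ∀ i, 0 ≤ Q i) (hPQ : ∀ i, P i ≠ 0 → Q i ≠ 0)
    (hsum : ∑ i, Q i ≤ ∑ i, P i) :
    0 ≤ ∑ i, P i * logb b (P i / Q i) := by
  have hlogb : 0 < log b := log_pos hb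
  have termwise : ∀ i, (P i - Q i) / log b ≤ P i * logb b (P i / Q i) := by
    intro i
    rcases (hP i).eq_or_lt with hPi | hPi
    · rw [← hPi, zero_sub, zero_mul]
      exact div_nonpos_of_nonpos_of_nonneg (neg_nonpos.2 (hQ i)) hlogb.le
    · have hQi : 0 < Q i := (hQ i).lt_of_ne (hPQ i hPi.ne').symm
      have hlog := one_sub_inv_le_log_of_pos (div_pos hPi hQi)
      rw [inv_div] at hlog
      rw [logb, ← mul_div_assoc]
      gcongr
      calc P i - Q i = P i * (1 - Q i / P i) := by field_simp
        _ ≤ P i * log (P i / Q i) := by gcongr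
  calc (0 : ℝ) ≤ (∑ i, P i - ∑ i, Q i) / log b := div_nonneg (by linarith) hlogb.le
    _ = ∑ i, (P i - Q i) / log b := by rw [← sum_sub_distrib, sum_div]
    _ ≤ _ := sum_le_sum fun i _ => termwise i

theorem sum_negMulLog_prod {δ : Type*} [Fintype δ] {f : δ → ℝ} (hf : ∑ a, f a = 1) :
    ∀ n : ℕ, ∑ x : Fin n → δ, negMulLog (∏ i, f (x i)) = n * ∑ a, negMulLog (f a)
  | 0 => by simp
  | n + 1 => by
    rw [← (Fin.consEquiv fun _ => δ).sum_comp, Fintype.sum_prod_type]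
    simp only [Fin.consEquiv_apply, Fin.prod_univ_succ, Fin.cons_zero, Fin.cons_succ,
      negMulLog_mul, sum_add_distrib, ← sum_mul, ← mul_sum, sum_negMulLog_prod hf n,
      ← Fintype.sum_pow, hf]
    push_cast
    ring

section InformationMeasures

variable {α β γ : Type*} {p : Ω → ℝ}

theorem pr_nonneg (hp : ∀ ω, 0 ≤ p ω) (X : Ω → α) (x : α) : 0 ≤ pr p X x :=
  sum_nonneg fun ω _ => by split_ifs <;> simp [hp ω]

theorem pr_le_pr_comp (hp : ∀ ω, 0 ≤ p ω) (X : Ω → α) (f : α → β) (x : α) :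
    pr p X x ≤ pr p (fun ω => f (X ω)) (f x) :=
  sum_le_sum fun ω _ => by
    by_cases h : X ω = x
    · simp [h]
    · rw [if_neg h]
      split_ifs <;> simp [hp ω]

theorem pr_apply_pos (hp : ∀ ω, 0 ≤ p ω) (X : Ω → α) {ω : Ω} (hω : 0 < p ω) :
    0 < pr p X (X ω) := by
  calc 0 < p ω := hω
    _ = if X ω = X ω then p ω else 0 := (if_pos rfl).symm
    _ ≤ pr p X (X ω) := single_le_sum (f := fun ω' => if X ω' = X ω then p ω' else 0)
        (fun ω' _ => by split_ifs <;> simp [hp ω']) (mem_univ ω)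

theorem pr_comp_of_injective (X : Ω → α) {f : α → β} (hf : Function.Injective f) (x : α) :
    pr p (fun ω => f (X ω)) (f x) = pr p X x := by
  simp only [pr, hf.eq_iff]

theorem pr_comp_equiv (X : Ω → α) (e : α ≃ β) (y : β) :
    pr p (fun ω => e (X ω)) y = pr p X (e.symm y) := by
  simp only [pr, ← e.eq_symm_apply]

theorem sum_pr_pair [Fintype α] (A : Ω → α) (B : Ω → β) (b : β) :
    ∑ a, pr p (fun ω => (A ω, B ω)) (a, b) = pr p B b := by
  simp only [pr, Prod.mk.injEq]
  rw [sum_comm]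
  simp [ite_and]

variable [Fintype α] [Fintype β] [Fintype γ]

theorem sum_pr_mul (X : Ω → α) (f : α → ℝ) :
    ∑ x, pr p X x * f x = ∑ ω, p ω * f (X ω) := by
  simp only [pr, sum_mul, ite_mul, zero_mul]
  rw [sum_comm]
  simp

theorem sum_pr (X : Ω → α) : ∑ x, pr p X x = ∑ ω, p ω := by
  simpa using sum_pr_mul (p := p) X 1

theorem ent_eq_neg_sum (X : Ω → α) : ent p X = -∑ ω, p ω * logb 2 (pr p X (X ω)) := by
  rw [ent, ← sum_pr_mul X fun x => logb 2 (pr p X x), ← sum_neg_distrib]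

theorem ent_eq_sum_negMulLog (X : Ω → α) : ent p X = (∑ x, negMulLog (pr p X x)) / log 2 := by
  rw [ent, sum_div]
  congr 1 with x
  rw [negMulLog, logb]
  ring

theorem ent_comp_of_injective (X : Ω → α) {f : α → β} (hf : Function.Injective f) :
    ent p (fun ω => f (X ω)) = ent p X := by
  simp only [ent_eq_neg_sum, pr_comp_of_injective X hf]

theorem ent_pair_comm (A : Ω → α) (B : Ω → β) :
    ent p (fun ω => (A ω, B ω)) = ent p (fun ω => (B ω, A ω)) :=
  ent_comp_of_injective (fun ω => (B ω, A ω)) Prod.swap_injective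

theorem ent_const (hp : IsPMF p) : ent p (fun _ => ()) = 0 := by
  simp [ent, pr, hp.2]

theorem cmi_eq_sum_mul_logb (hp : ∀ ω, 0 ≤ p ω) (X : Ω → α) (Y : Ω → β) (Z : Ω → γ) :
    cmi p X Y Z = ∑ ω, p ω * logb 2
      (pr p (fun ω => (X ω, Y ω, Z ω)) (X ω, Y ω, Z ω) * pr p Z (Z ω) /
        (pr p (fun ω => (X ω, Z ω)) (X ω, Z ω) * pr p (fun ω => (Y ω, Z ω)) (Y ω, Z ω))) := by
  have pointwise : ∀ ω, p ω * logb 2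
      (pr p (fun ω => (X ω, Y ω, Z ω)) (X ω, Y ω, Z ω) * pr p Z (Z ω) /
        (pr p (fun ω => (X ω, Z ω)) (X ω, Z ω) * pr p (fun ω => (Y ω, Z ω)) (Y ω, Z ω))) =
      p ω * logb 2 (pr p (fun ω => (X ω, Y ω, Z ω)) (X ω, Y ω, Z ω))
        + p ω * logb 2 (pr p Z (Z ω))
        - p ω * logb 2 (pr p (fun ω => (X ω, Z ω)) (X ω, Z ω))
        - p ω * logb 2 (pr p (fun ω => (Y ω, Z ω)) (Y ω, Z ω)) := by
    intro ω
    rcases (hp ω).eq_or_lt with hω | hω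
    · simp [← hω]
    · have hXYZ := (pr_apply_pos hp (fun ω => (X ω, Y ω, Z ω)) hω).ne'
      have hXZ := (pr_apply_pos hp (fun ω => (X ω, Z ω)) hω).ne'
      have hYZ := (pr_apply_pos hp (fun ω => (Y ω, Z ω)) hω).ne'
      have hZ := (pr_apply_pos hp Z hω).ne'
      rw [logb_div (mul_ne_zero hXYZ hZ) (mul_ne_zero hXZ hYZ), logb_mul hXYZ hZ,
        logb_mul hXZ hYZ]
      ring
  rw [sum_congr rfl fun ω _ => pointwise ω, cmi]
  simp only [ent_eq_neg_sum, sum_add_distrib, sum_sub_distrib]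
  ring

theorem cmi_nonneg (hp : ∀ ω, 0 ≤ p ω) (X : Ω → α) (Y : Ω → β) (Z : Ω → γ) :
    0 ≤ cmi p X Y Z := by
  set W : Ω → (α × γ) × β := fun ω => ((X ω, Z ω), Y ω)
  -- the law that makes `X` and `Y` conditionally independent given `Z`
  set Q : (α × γ) × β → ℝ := fun t =>
    pr p (fun ω => (X ω, Z ω)) t.1 * pr p (fun ω => (Y ω, Z ω)) (t.2, t.1.2) / pr p Z t.1.2
  have hQ : ∀ t, 0 ≤ Q t := fun t =>
    div_nonneg (mul_nonneg (pr_nonneg hp _ _) (pr_nonneg hp _ _)) (pr_nonneg hp _ _)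
  have hsupp : ∀ t, pr p W t ≠ 0 → Q t ≠ 0 := by
    intro t ht
    have ht := (pr_nonneg hp W t).lt_of_ne ht.symm
    have hXZ := ht.trans_le (pr_le_pr_comp hp W Prod.fst t)
    have hYZ := ht.trans_le (pr_le_pr_comp hp W (fun s => (s.2, s.1.2)) t)
    have hZ := ht.trans_le (pr_le_pr_comp hp W (fun s => s.1.2) t)
    exact (div_pos (mul_pos hXZ hYZ) hZ).ne'
  have hsum : ∑ t, Q t ≤ ∑ t, pr p W t := calc
    ∑ t, Q t = ∑ s : α × γ, pr p (fun ω => (X ω, Z ω)) s * (pr p Z s.2 / pr p Z s.2) := by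
      rw [Fintype.sum_prod_type]
      refine sum_congr rfl fun s _ => ?_
      simp only [Q, mul_div_assoc, ← mul_sum, ← sum_div, sum_pr_pair]
    _ ≤ ∑ s : α × γ, pr p (fun ω => (X ω, Z ω)) s :=
      sum_le_sum fun s _ => mul_le_of_le_one_right (pr_nonneg hp _ _) (div_self_le_one _)
    _ = ∑ t, pr p W t := by rw [sum_pr, sum_pr]
  have hW : ∀ ω, pr p W (W ω) = pr p (fun ω => (X ω, Y ω, Z ω)) (X ω, Y ω, Z ω) :=
    fun ω => pr_comp_of_injective (fun ω => (X ω, Y ω, Z ω)) (f := fun t => ((t.1, t.2.2), t.2.1))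
      (fun s t h => by simp_all [Prod.ext_iff]) (X ω, Y ω, Z ω)
  calc (0 : ℝ) ≤ ∑ t, pr p W t * logb 2 (pr p W t / Q t) :=
        sum_mul_logb_div_nonneg one_lt_two (pr_nonneg hp W) hQ hsupp hsum
    _ = ∑ ω, p ω * logb 2 (pr p W (W ω) / Q (W ω)) := sum_pr_mul W _
    _ = cmi p X Y Z := by
      rw [cmi_eq_sum_mul_logb hp]
      refine sum_congr rfl fun ω _ => ?_
      rw [hW, div_div_eq_mul_div]

theorem cmi_eq_zero_of_markovChain (hp : ∀ ω, 0 ≤ p ω)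
    {A : Ω → α} {B : Ω → β} {C : Ω → γ} (h : MarkovChain p A B C) : cmi p A C B = 0 := by
  rw [cmi_eq_sum_mul_logb hp]
  refine sum_eq_zero fun ω _ => ?_
  have hACB : pr p (fun ω => (A ω, C ω, B ω)) (A ω, C ω, B ω) =
      pr p (fun ω => (A ω, B ω, C ω)) (A ω, B ω, C ω) :=
    pr_comp_of_injective (fun ω => (A ω, B ω, C ω)) (f := fun t => (t.1, t.2.2, t.2.1))
      (fun s t h => by simp_all [Prod.ext_iff]) (A ω, B ω, C ω)
  have hCB :
      pr p (fun ω => (C ω, B ω)) (C ω, B ω) = pr p (fun ω => (B ω, C ω)) (B ω, C ω) :=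
    pr_comp_of_injective (fun ω => (B ω, C ω)) Prod.swap_injective (B ω, C ω)
  rw [hACB, hCB, h]
  by_cases h0 :
    pr p (fun ω => (A ω, B ω)) (A ω, B ω) * pr p (fun ω => (B ω, C ω)) (B ω, C ω) = 0
  <;> simp [h0]

theorem mi_nonneg (hp : IsPMF p) (X : Ω → α) (Y : Ω → β) : 0 ≤ mi p X Y := by
  have h := cmi_nonneg hp.1 X Y fun _ => ()
  rw [cmi, ent_comp_of_injective X (Prod.mk_left_injective ()),
    ent_comp_of_injective Y (Prod.mk_left_injective ()),
    ent_comp_of_injective (fun ω => (X ω, Y ω)) (f := fun t => (t.1, t.2, ()))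
      (fun s t h => by simp_all [Prod.ext_iff]), ent_const hp] at h
  rw [mi]
  linarith

theorem mi_add_cmi_comm (W : Ω → α) (X : Ω → β) (Y : Ω → γ) :
    mi p W Y + cmi p X Y W = mi p X Y + cmi p W Y X := by
  have hXYW : ent p (fun ω => (X ω, Y ω, W ω)) = ent p (fun ω => (W ω, Y ω, X ω)) :=
    ent_comp_of_injective (fun ω => (W ω, Y ω, X ω)) (f := fun t => (t.2.2, t.2.1, t.1))
      (fun s t h => by simp_all [Prod.ext_iff])
  rw [mi, mi, cmi, cmi, hXYW, ent_pair_comm W Y, ent_pair_comm X W, ent_pair_comm X Y]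
  ring

theorem cmi_eq_condEnt_sub_condEnt (X : Ω → α) (Y : Ω → β) (Z : Ω → γ) :
    cmi p X Y Z = condEnt p X Z - condEnt p X fun ω => (Y ω, Z ω) := by
  rw [cmi, condEnt, condEnt]
  ring

theorem condEnt_le_condEnt_comp (hp : ∀ ω, 0 ≤ p ω) (X : Ω → α) (W : Ω → β) (f : β → γ) :
    condEnt p X W ≤ condEnt p X fun ω => f (W ω) := by
  have h := cmi_nonneg hp X W fun ω => f (W ω)
  rw [cmi, ent_comp_of_injective W (f := fun w => (w, f w)) fun s t h => congrArg Prod.fst h,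
    ent_comp_of_injective (fun ω => (X ω, W ω)) (f := fun t => (t.1, t.2, f t.2))
      (fun s t h => by simp_all [Prod.ext_iff])] at h
  rw [condEnt, condEnt]
  linarith

theorem mi_le_mi_of_markovChain (hp : ∀ ω, 0 ≤ p ω) {U : Ω → α} {X : Ω → β} {Y : Ω → γ}
    (h : MarkovChain p U X Y) : mi p U Y ≤ mi p X Y := by
  linarith [mi_add_cmi_comm (p := p) U X Y, cmi_nonneg hp X Y U,
    cmi_eq_zero_of_markovChain hp h]

theorem cmi_le_mi_of_markovChain (hp : IsPMF p) {V : Ω → α} {U : Ω → β} {Y : Ω → γ}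
    (h : MarkovChain p V U Y) : cmi p U Y V ≤ mi p U Y := by
  linarith [mi_add_cmi_comm (p := p) V U Y, mi_nonneg hp V Y,
    cmi_eq_zero_of_markovChain hp.1 h]

theorem ent_eq_mul_ent_of_pr_eq_prod {Ω' δ : Type*} [Fintype Ω'] [Fintype δ] {q : Ω' → ℝ}
    (hq : IsPMF q) {n : ℕ} (X : Ω → Fin n → δ) (Y : Ω' → δ)
    (h : ∀ x, pr p X x = ∏ i, pr q Y (x i)) :
    ent p X = n * ent q Y := by
  simp only [ent_eq_sum_negMulLog, h, sum_negMulLog_prod ((sum_pr Y).trans hq.2)]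
  ring

theorem condEnt_eq_mul_condEnt_of_iid {q : α × β → ℝ} (hq : IsPMF q) {n : ℕ}
    (A : Ω → Fin n → α) (B : Ω → Fin n → β)
    (hiid : ∀ a b, pr p (fun ω => (A ω, B ω)) (a, b) = ∏ i, q (a i, b i)) :
    condEnt p A B = n * condEnt q Prod.fst Prod.snd := by
  have hq_pr : ∀ t, pr q (fun w => (w.1, w.2)) t = q t := by simp [pr]
  have hjoint : ent p (fun ω => (A ω, B ω)) = n * ent q (fun w => (w.1, w.2)) := by
    let e := Equiv.arrowProdEquivProdArrow (Fin n) (fun _ => α) (fun _ => β)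
    rw [← ent_comp_of_injective _ e.symm.injective]
    refine ent_eq_mul_ent_of_pr_eq_prod hq _ _ fun x => ?_
    rw [pr_comp_equiv, e.symm_symm, hiid]
    simp [e, hq_pr]
  have hmarg : ent p B = n * ent q Prod.snd := by
    refine ent_eq_mul_ent_of_pr_eq_prod hq B _ fun b => ?_
    simp only [← sum_pr_pair A B b, hiid, ← sum_pr_pair Prod.fst Prod.snd, hq_pr]
    exact (Fintype.prod_sum fun i a => q (a, b i)).symm
  rw [condEnt, condEnt, hjoint, hmarg]
  ring

end InformationMeasures

section Stmt8

variable {Ω : Type} [Fintype Ω] {U V Xc Yc : Type}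
  [Fintype U] [Fintype V] [Fintype Xc] [Fintype Yc]

theorem stmt8 (n : ℕ) (hn : 0 < n) (p : Ω → ℝ) (hp : IsPMF p)
    (q : U × V → ℝ) (hq : IsPMF q)
    (U1 : Ω → Fin n → U) (V1 : Ω → Fin n → V)
    (X1 : Ω → Fin n → Xc) (Y1 : Ω → Fin n → Yc)
    -- (U1^n, V1^n) are n i.i.d. copies of a pair with single-letter law q
    (hiid : ∀ (u : Fin n → U) (v : Fin n → V),
      pr p (fun ω => (U1 ω, V1 ω)) (u, v) = ∏ i, q (u i, v i))
    -- Markov chains U1^n → X1^n → Y1^n and V1^n → U1^n → Y1^n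
    (hmc1 : MarkovChain p U1 X1 Y1)
    (hmc2 : MarkovChain p V1 U1 Y1)
    (g : (Fin n → Yc) → (Fin n → V) → Fin n → U) :
    (1 / (n : ℝ)) * mi p X1 Y1 ≥
      condEnt q Prod.fst Prod.snd
        - (1 / (n : ℝ)) * condEnt p U1 (fun ω => g (Y1 ω) (V1 ω)) := by
  have key : n * condEnt q Prod.fst Prod.snd - condEnt p U1 (fun ω => g (Y1 ω) (V1 ω)) ≤
      mi p X1 Y1 := calc
    _ = condEnt p U1 V1 - condEnt p U1 (fun ω => g (Y1 ω) (V1 ω)) := by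
      rw [condEnt_eq_mul_condEnt_of_iid hq U1 V1 hiid]
    _ ≤ condEnt p U1 V1 - condEnt p U1 (fun ω => (Y1 ω, V1 ω)) :=
      sub_le_sub_left
        (condEnt_le_condEnt_comp hp.1 U1 (fun ω => (Y1 ω, V1 ω)) fun w => g w.1 w.2) _
    _ = cmi p U1 Y1 V1 := (cmi_eq_condEnt_sub_condEnt U1 Y1 V1).symm
    _ ≤ mi p U1 Y1 := cmi_le_mi_of_markovChain hp hmc2
    _ ≤ mi p X1 Y1 := mi_le_mi_of_markovChain hp.1 hmc1
  have hn' : (0 : ℝ) < n := Nat.cast_pos.2 hn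
  calc condEnt q Prod.fst Prod.snd - 1 / (n : ℝ) * condEnt p U1 (fun ω => g (Y1 ω) (V1 ω))
      = 1 / (n : ℝ) * (n * condEnt q Prod.fst Prod.snd
          - condEnt p U1 (fun ω => g (Y1 ω) (V1 ω))) := by field_simp
    _ ≤ 1 / (n : ℝ) * mi p X1 Y1 := by gcongr

end Stmt8

end Paper
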